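/- Let d ≥ 1, m = 2d, r, t ∈ ℂ, n ≥ 1, and κ = (r−t)/√m + √m·t. For θ : Fin n × Fin m → ℝ and x ∈ ℤ^d define P(θ, x) = Σ_{b∈Fin m} | Σ_{a∈(Fin m)^n, e(a_1)+⋯+e(a_n) = x, a_1 = b} exp(i·Σ_j θ(j, a_j)) · Ξ(a) · κ |². Then for every x ∈ ℤ^d, (1/(2π)^{nm}) · ∫_{[0,2π]^{Fin n × Fin m}} P(θ, x) dθ = |κ|² · Σ_{a∈(Fin m)^n, e(a_1)+⋯+e(a_n) = x} |Ξ(a)|². -/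

import Mathlib

noncomputable section

open scoped BigOperators
open MeasureTheory Real

/-- `Ξ(a_1, …, a_n) = ∏_{j=1}^{n-1} (t + (r - t) δ_{a_j, a_{j+1}})` (empty product is 1). -/
def Xi (m n : ℕ) (r t : ℂ) (a : Fin n → Fin m) : ℂ :=
  ∏ j : Fin n, if h : (j : ℕ) + 1 < n then
    (t + (r - t) * (if a j = a ⟨(j : ℕ) + 1, h⟩ then 1 else 0)) else 1

/-- The `2d` signed standard basis vectors of `ℤ^d`: `e(2k) = u_k`, `e(2k+1) = -u_k`. -/
def eZ (d : ℕ) (a : Fin (2 * d)) : Fin d → ℤ :=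
  Pi.single ⟨(a : ℕ) / 2, by have := a.2; omega⟩ (if (a : ℕ) % 2 = 0 then 1 else -1)

/-- The cube `[0, 2π]^{Fin n × Fin m}` of phase records. -/
def phaseCube (n m : ℕ) : Set (Fin n × Fin m → ℝ) :=
  Set.pi Set.univ (fun _ => Set.Icc 0 (2 * π))

/-!
Expanding the squared modulus turns `P(θ, x)` into a double sum over pairs of paths `(a, a')`
weighted by `exp(i Σ_p (1[a p.1 = p.2] - 1[a' p.1 = p.2]) θ_p)`. The phases are independent, so
the average of this factor is a product of one-dimensional averages `∫₀^{2π} e^{ikθ} dθ / 2π`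
with `k ∈ {-1, 0, 1}`, which vanishes unless `a = a'`: only the diagonal terms survive, and summing
them over the first step `b` recovers the full set of paths from `0` to `x`.
-/

open Complex ComplexConjugate

theorem setIntegral_Icc_zero_two_pi_exp_int_mul_I (k : ℤ) :
    ∫ u in Set.Icc 0 (2 * π), cexp (k * I * u) = if k = 0 then ((2 * π : ℝ) : ℂ) else 0 := by
  split_ifs with hk
  · simp [hk, Real.pi_pos.le]
  · have hc : (k : ℂ) * I ≠ 0 := mul_ne_zero (Int.cast_ne_zero.2 hk) I_ne_zero
    have hperiod : cexp (k * I * ((2 * π : ℝ) : ℂ)) = 1 := by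
      rw [← exp_int_mul_two_pi_mul_I k]
      push_cast
      ring_nf
    rw [integral_Icc_eq_integral_Ioc, ← intervalIntegral.integral_of_le (by positivity),
      integral_exp_mul_complex hc, hperiod]
    simp

theorem setIntegral_univ_pi_prod {ι 𝕜 : Type*} [RCLike 𝕜] [Fintype ι] {E : ι → Type*}
    [∀ i, MeasureSpace (E i)] [∀ i, SigmaFinite (volume : Measure (E i))]
    (s : ∀ i, Set (E i)) (f : ∀ i, E i → 𝕜) :
    ∫ x in Set.univ.pi s, ∏ i, f i (x i) = ∏ i, ∫ y in s i, f i y := by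
  rw [volume_pi, Measure.restrict_pi_pi]
  exact integral_fintype_prod_eq_prod f

section Paths

variable {ι κ : Type*} [Fintype ι] [Fintype κ] [DecidableEq κ]

def occupation (a : ι → κ) (p : ι × κ) : ℤ := if a p.1 = p.2 then 1 else 0

theorem sum_apply_eq_sum_occupation_mul (a : ι → κ) (θ : ι × κ → ℝ) :
    ∑ j, θ (j, a j) = ∑ p, occupation a p * θ p := by
  simp [occupation, Fintype.sum_prod_type]

theorem exp_sum_mul_conj_exp_sum (a a' : ι → κ) (θ : ι × κ → ℝ) :
    cexp (I * ↑(∑ j, θ (j, a j))) * conj (cexp (I * ↑(∑ j, θ (j, a' j))))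
      = ∏ p, cexp (↑(occupation a p - occupation a' p) * I * θ p) := by
  rw [← exp_conj, ← Complex.exp_add, sum_apply_eq_sum_occupation_mul a,
    sum_apply_eq_sum_occupation_mul a', ← Complex.exp_sum]
  congr 1
  rw [map_mul, conj_I, conj_ofReal]
  push_cast
  rw [Finset.mul_sum, Finset.mul_sum, ← Finset.sum_add_distrib]
  exact Finset.sum_congr rfl fun p _ => by ring

theorem setIntegral_univ_pi_Icc_exp_mul_conj (a a' : ι → κ) :
    ∫ θ in Set.univ.pi fun _ : ι × κ => Set.Icc 0 (2 * π),
        cexp (I * ↑(∑ j, θ (j, a j))) * conj (cexp (I * ↑(∑ j, θ (j, a' j))))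
      = if a = a' then (((2 * π) ^ Fintype.card (ι × κ) : ℝ) : ℂ) else 0 := by
  simp_rw [exp_sum_mul_conj_exp_sum a a']
  rw [setIntegral_univ_pi_prod _
    fun p (u : ℝ) => cexp (↑(occupation a p - occupation a' p) * I * u)]
  simp_rw [setIntegral_Icc_zero_two_pi_exp_int_mul_I]
  split_ifs with h
  · subst h
    simp
  · obtain ⟨j, hj⟩ := Function.ne_iff.1 h
    exact Finset.prod_eq_zero (Finset.mem_univ (j, a j)) (by simp [occupation, Ne.symm hj])

end Paths

theorem integral_norm_sum_sq_of_orthogonal {X α : Type*} [MeasurableSpace X] {μ : Measure X}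
    [DecidableEq α] (φ : α → X → ℂ) (C : ℝ)
    (hint : ∀ a a', Integrable (fun x => φ a x * conj (φ a' x)) μ)
    (horth : ∀ a a', ∫ x, φ a x * conj (φ a' x) ∂μ = if a = a' then (C : ℂ) else 0)
    (s : Finset α) (c : α → ℂ) :
    ∫ x, ‖∑ a ∈ s, φ a x * c a‖ ^ 2 ∂μ = C * ∑ a ∈ s, ‖c a‖ ^ 2 := by
  have hexpand : ∀ x, ‖∑ a ∈ s, φ a x * c a‖ ^ 2
      = (∑ a ∈ s, ∑ a' ∈ s, c a * conj (c a') * (φ a x * conj (φ a' x))).re := by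
    intro x
    rw [Complex.sq_norm, ← ofReal_re (normSq _), ← mul_conj, map_sum, Finset.sum_mul_sum]
    congr 1
    refine Finset.sum_congr rfl fun a _ => Finset.sum_congr rfl fun a' _ => ?_
    rw [map_mul]
    ring
  have hint_sum : Integrable
      (fun x => ∑ a ∈ s, ∑ a' ∈ s, c a * conj (c a') * (φ a x * conj (φ a' x))) μ :=
    integrable_finsetSum _ fun a _ => integrable_finsetSum _ fun a' _ => (hint a a').const_mul _
  simp_rw [hexpand]
  rw [← RCLike.re_eq_complex_re, integral_re hint_sum, integral_finsetSum _ fun a _ =>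
    integrable_finsetSum _ fun a' _ => (hint a a').const_mul _]
  have hdiag : ∀ a ∈ s, ∫ x, ∑ a' ∈ s, c a * conj (c a') * (φ a x * conj (φ a' x)) ∂μ
      = ((C * ‖c a‖ ^ 2 : ℝ) : ℂ) := by
    intro a ha
    rw [integral_finsetSum _ fun a' _ => (hint a a').const_mul _]
    simp_rw [integral_const_mul, horth, mul_ite, mul_zero, Finset.sum_ite_eq, if_pos ha, mul_conj,
      Complex.sq_norm]
    push_cast
    ring
  rw [Finset.sum_congr rfl hdiag, ← ofReal_sum, RCLike.re_eq_complex_re, ofReal_re, Finset.mul_sum]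

/-- Eq. (25) of the paper: the phase-averaged probability of finding the quantum walk
with random phase shifts (generalized Grover coin) at site `x` after `n` steps is the
incoherent sum `|κ|² Σ_{paths a from 0 to x} |Ξ(a)|²`. -/
theorem mean_probability_grover (d : ℕ) (r t : ℂ) (n : ℕ) (hn : 1 ≤ n)
    (x : Fin d → ℤ) :
    (1 / (2 * π) ^ (n * (2 * d))) *
        ∫ θ in phaseCube n (2 * d),
          ∑ b : Fin (2 * d),
            ‖∑ a ∈ Finset.univ.filter
                (fun a : Fin n → Fin (2 * d) =>
                  (∑ j : Fin n, eZ d (a j)) = x ∧ a ⟨0, by omega⟩ = b),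
              Complex.exp (Complex.I * ((∑ j : Fin n, θ (j, a j) : ℝ) : ℂ)) *
                Xi (2 * d) n r t a *
                ((r - t) / (Real.sqrt (2 * d) : ℂ) + (Real.sqrt (2 * d) : ℂ) * t)‖ ^ 2
      = ‖(r - t) / (Real.sqrt (2 * d) : ℂ) + (Real.sqrt (2 * d) : ℂ) * t‖ ^ 2 *
          ∑ a ∈ Finset.univ.filter
              (fun a : Fin n → Fin (2 * d) => (∑ j : Fin n, eZ d (a j)) = x),
            ‖Xi (2 * d) n r t a‖ ^ 2 := by
  have hcube : IsCompact (phaseCube n (2 * d)) := isCompact_univ_pi fun _ => isCompact_Icc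
  have hintegrable : ∀ a a' : Fin n → Fin (2 * d), IntegrableOn
      (fun θ => cexp (I * ((∑ j, θ (j, a j) : ℝ) : ℂ)) *
        conj (cexp (I * ((∑ j, θ (j, a' j) : ℝ) : ℂ)))) (phaseCube n (2 * d)) :=
    fun _ _ => ContinuousOn.integrableOn_compact hcube (by fun_prop)
  rw [integral_finsetSum _ fun _ _ => ContinuousOn.integrableOn_compact hcube (by fun_prop)]
  simp_rw [mul_assoc, integral_norm_sum_sq_of_orthogonal _ _ hintegrable
    setIntegral_univ_pi_Icc_exp_mul_conj]
  rw [Fintype.card_prod, Fintype.card_fin, Fintype.card_fin, ← Finset.mul_sum, ← mul_assoc,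
    one_div_mul_cancel (by positivity), one_mul]
  simp_rw [← Finset.filter_filter]
  rw [Finset.sum_fiberwise, Finset.mul_sum]
  exact Finset.sum_congr rfl fun a _ => by rw [norm_mul, mul_pow, mul_comm]
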